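/- arXiv:2306.08288 — 2 statements merged into one kernel-verified Lean document; each statement's English description precedes it below -/
import Mathlib

section
/- (Theorem 1, Symmetry of Redundant Information, for the ordering Q ⊏ X iff H[Q|X] = 0, with all system variables as sources.) Let X₁, …, X_n (n ≥ 1) be measurable functions Ω → ℕ with finite range on a probability space (Ω, μ). For each index i, define R_i := sSup { I[Q : X_i] | Q : Ω → ℕ measurable with finite range and H[Q | X_j] = 0 for every j ∈ {1,…,n} }. Then R_i = R_k for all indices i, k, and moreover R_i = sSup { H[Q] | Q : Ω → ℕ measurable with finite range and H[Q | X_j] = 0 for every j ∈ {1,…,n} }. In particular, the redundant information of the system does not depend on which variable is designated as the target. -/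
open MeasureTheory ProbabilityTheory Real

/-- Shannon entropy (natural logarithm) of a random variable `X : Ω → S`:
`H[X] = ∑ₓ -P(X = x) log P(X = x)`. -/
noncomputable def entropy {Ω S : Type*} [MeasurableSpace Ω] [MeasurableSpace S]
    (μ : Measure Ω) (X : Ω → S) : ℝ :=
  ∑' x : S, Real.negMulLog (μ (X ⁻¹' {x})).toReal

/-- Conditional Shannon entropy `H[X|Y] = ∑_y P(Y = y) · H[X ; μ conditioned on Y = y]`. -/
noncomputable def condEntropy {Ω S T : Type*} [MeasurableSpace Ω] [MeasurableSpace S]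
    [MeasurableSpace T] (μ : Measure Ω) (X : Ω → S) (Y : Ω → T) : ℝ :=
  ∑' y : T, (μ (Y ⁻¹' {y})).toReal * entropy (μ[|Y ⁻¹' {y}]) X

/-- Mutual information `I[X:Y] = H[X] + H[Y] − H[⟨X,Y⟩]`. -/
noncomputable def mutualInfo {Ω S T : Type*} [MeasurableSpace Ω] [MeasurableSpace S]
    [MeasurableSpace T] (μ : Measure Ω) (X : Ω → S) (Y : Ω → T) : ℝ :=
  entropy μ X + entropy μ Y - entropy μ (fun ω => (X ω, Y ω))

/-- Conditional mutual information
`I[X:Y|Z] = H[⟨X,Z⟩] + H[⟨Y,Z⟩] − H[⟨⟨X,Y⟩,Z⟩] − H[Z]`. -/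
noncomputable def condMutualInfo {Ω S T W : Type*} [MeasurableSpace Ω] [MeasurableSpace S]
    [MeasurableSpace T] [MeasurableSpace W] (μ : Measure Ω)
    (X : Ω → S) (Y : Ω → T) (Z : Ω → W) : ℝ :=
  entropy μ (fun ω => (X ω, Z ω)) + entropy μ (fun ω => (Y ω, Z ω))
    - entropy μ (fun ω => ((X ω, Y ω), Z ω)) - entropy μ Z

/-! If `H[Q|X] = 0`, then on every fibre `{X = x}` of positive mass `Q` has zero entropy under
the conditional measure, hence is almost surely constant there. So `Q` is almost surely a
function `g(X)`, `⟨Q, X⟩` is almost surely the injective image `⟨g(X), X⟩` of `X`, and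
`H[⟨Q, X⟩] = H[X]`, i.e. `I[Q : X] = H[Q]`. Hence `I[Q : X_i] = H[Q]` for every admissible `Q`
and every `i`: the sets whose suprema define the `R_i` all coincide with the set of admissible
entropies. -/

open Function Set

lemma eq_one_of_negMulLog_eq_zero {p : ℝ} (hp : 0 < p) (h : negMulLog p = 0) : p = 1 := by
  rw [negMulLog, neg_mul, neg_eq_zero, mul_eq_zero] at h
  rcases h with h | h
  · exact absurd h hp.ne'
  · rcases log_eq_zero.1 h with h | h | h <;> linarith

section Entropy

variable {Ω S T : Type*} [MeasurableSpace Ω] {μ : Measure Ω}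

lemma support_negMulLog_measure_preimage_subset_range (μ : Measure Ω) (X : Ω → S) :
    support (fun x => negMulLog (μ (X ⁻¹' {x})).toReal) ⊆ range X := by
  intro x hx
  by_contra hxX
  simp [preimage_singleton_eq_empty.2 hxX] at hx

variable [MeasurableSpace S] [MeasurableSpace T]

lemma negMulLog_measure_toReal_nonneg [IsZeroOrProbabilityMeasure μ] (s : Set Ω) :
    0 ≤ negMulLog (μ s).toReal :=
  negMulLog_nonneg ENNReal.toReal_nonneg (ENNReal.toReal_le_of_le_ofReal zero_le_one
    (by simpa using prob_le_one))

lemma entropy_nonneg [IsZeroOrProbabilityMeasure μ] (X : Ω → S) : 0 ≤ entropy μ X :=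
  tsum_nonneg fun _ => negMulLog_measure_toReal_nonneg _

lemma entropy_congr_ae {X Y : Ω → S} (h : X =ᵐ[μ] Y) : entropy μ X = entropy μ Y := by
  unfold entropy
  congr! 4 with x
  exact measure_congr (h.preimage {x})

lemma entropy_comp_of_injective {f : S → T} (hf : Injective f) (X : Ω → S) :
    entropy μ (f ∘ X) = entropy μ X := by
  unfold entropy
  rw [← hf.tsum_eq]
  · simp only [preimage_comp, ← image_singleton, hf.preimage_image]
  · exact (support_negMulLog_measure_preimage_subset_range μ (f ∘ X)).trans
      (range_comp_subset_range X f)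

lemma entropy_prod_eq_of_ae_eq_comp {Q : Ω → S} {X : Ω → T} {g : T → S}
    (h : Q =ᵐ[μ] g ∘ X) :
    entropy μ (fun ω => (Q ω, X ω)) = entropy μ X :=
  calc entropy μ (fun ω => (Q ω, X ω))
      = entropy μ ((fun x => (g x, x)) ∘ X) :=
        entropy_congr_ae (h.mono fun _ hω => Prod.ext hω rfl)
    _ = entropy μ X := entropy_comp_of_injective (fun _ _ hxy => congrArg Prod.snd hxy) X

lemma entropy_cond_eq_zero_of_condEntropy_eq_zero [IsFiniteMeasure μ] {Q : Ω → S} {X : Ω → T}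
    (hXf : (range X).Finite) (h : condEntropy μ Q X = 0) {x : T} (hx : μ (X ⁻¹' {x}) ≠ 0) :
    entropy μ[|X ⁻¹' {x}] Q = 0 := by
  have hsupp :
      support (fun x => (μ (X ⁻¹' {x})).toReal * entropy μ[|X ⁻¹' {x}] Q) ⊆ range X := by
    intro y hy
    by_contra hyX
    simp [preimage_singleton_eq_empty.2 hyX] at hy
  have hterms := (hasSum_zero_iff_of_nonneg fun _ => mul_nonneg ENNReal.toReal_nonneg
    (entropy_nonneg Q)).1 ((summable_of_hasFiniteSupport (hXf.subset hsupp)).hasSum_iff.2 h)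
  exact (mul_eq_zero.1 (congrFun hterms x)).resolve_left
    (ENNReal.toReal_ne_zero.2 ⟨hx, measure_ne_top μ _⟩)

variable [MeasurableSingletonClass S] [Countable S]

lemma exists_ae_eq_const_of_entropy_eq_zero [IsProbabilityMeasure μ] {X : Ω → S}
    (hX : Measurable X) (hXf : (range X).Finite) (h : entropy μ X = 0) :
    ∃ x, ∀ᵐ ω ∂μ, X ω = x := by
  obtain ⟨x, hx⟩ : ∃ x, μ (X ⁻¹' {x}) ≠ 0 := by
    by_contra! hnull
    have := (measure_preimage_eq_zero_iff_of_countable countable_univ).2 fun x _ => hnull x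
    simp at this
  have hterms := (hasSum_zero_iff_of_nonneg fun _ => negMulLog_measure_toReal_nonneg _).1
    ((summable_of_hasFiniteSupport
      (hXf.subset (support_negMulLog_measure_preimage_subset_range μ X))).hasSum_iff.2 h)
  have hx1 : μ (X ⁻¹' {x}) = 1 := (ENNReal.toReal_eq_one_iff _).1 <|
    eq_one_of_negMulLog_eq_zero (ENNReal.toReal_pos hx (measure_ne_top μ _)) (congrFun hterms x)
  exact ⟨x, ae_iff.2 ((prob_compl_eq_zero_iff (hX (measurableSet_singleton x))).2 hx1)⟩

lemma exists_ae_eq_comp_of_condEntropy_eq_zero [IsProbabilityMeasure μ]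
    [MeasurableSingletonClass T] [Countable T] {Q : Ω → S} {X : Ω → T}
    (hQ : Measurable Q) (hQf : (range Q).Finite) (hX : Measurable X) (hXf : (range X).Finite)
    (h : condEntropy μ Q X = 0) : ∃ g : T → S, Q =ᵐ[μ] g ∘ X := by
  have hfiber : ∀ x, ∃ q, ∀ᵐ ω ∂μ, X ω = x → Q ω = q := by
    intro x
    by_cases hx : μ (X ⁻¹' {x}) = 0
    · obtain ⟨ω⟩ := nonempty_of_isProbabilityMeasure μ
      exact ⟨Q ω, (measure_eq_zero_iff_ae_notMem.1 hx).mono fun _ hω hωx => absurd hωx hω⟩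
    · have := cond_isProbabilityMeasure hx
      obtain ⟨q, hq⟩ := exists_ae_eq_const_of_entropy_eq_zero hQ hQf
        (entropy_cond_eq_zero_of_condEntropy_eq_zero hXf h hx)
      refine ⟨q, (ae_restrict_iff' (hX (measurableSet_singleton x))).1 ?_⟩
      exact (Measure.ae_ennreal_smul_measure_iff
        (ENNReal.inv_ne_zero.2 (measure_ne_top μ _))).1 hq
  choose g hg using hfiber
  exact ⟨g, (ae_all_iff.2 hg).mono fun ω hω => hω (X ω) rfl⟩

lemma mutualInfo_eq_entropy_of_condEntropy_eq_zero [IsProbabilityMeasure μ]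
    [MeasurableSingletonClass T] [Countable T] {Q : Ω → S} {X : Ω → T}
    (hQ : Measurable Q) (hQf : (range Q).Finite) (hX : Measurable X) (hXf : (range X).Finite)
    (h : condEntropy μ Q X = 0) : mutualInfo μ Q X = entropy μ Q := by
  obtain ⟨g, hg⟩ := exists_ae_eq_comp_of_condEntropy_eq_zero hQ hQf hX hXf h
  rw [mutualInfo, entropy_prod_eq_of_ae_eq_comp hg, add_sub_cancel_right]

end Entropy

theorem redundancy_symmetry_general {Ω : Type*} [MeasurableSpace Ω]
    (μ : Measure Ω) [IsProbabilityMeasure μ]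
    (n : ℕ) (X : Fin n → Ω → ℕ)
    (hX : ∀ i, Measurable (X i)) (hXfin : ∀ i, (Set.range (X i)).Finite) :
    (∀ i k : Fin n,
      sSup {x : ℝ | ∃ Q : Ω → ℕ, Measurable Q ∧ (Set.range Q).Finite ∧
          (∀ j, condEntropy μ Q (X j) = 0) ∧ x = mutualInfo μ Q (X i)} =
        sSup {x : ℝ | ∃ Q : Ω → ℕ, Measurable Q ∧ (Set.range Q).Finite ∧
          (∀ j, condEntropy μ Q (X j) = 0) ∧ x = mutualInfo μ Q (X k)}) ∧
    ∀ i : Fin n,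
      sSup {x : ℝ | ∃ Q : Ω → ℕ, Measurable Q ∧ (Set.range Q).Finite ∧
          (∀ j, condEntropy μ Q (X j) = 0) ∧ x = mutualInfo μ Q (X i)} =
        sSup {x : ℝ | ∃ Q : Ω → ℕ, Measurable Q ∧ (Set.range Q).Finite ∧
          (∀ j, condEntropy μ Q (X j) = 0) ∧ x = entropy μ Q} := by
  have hsets : ∀ i : Fin n,
      {x : ℝ | ∃ Q : Ω → ℕ, Measurable Q ∧ (Set.range Q).Finite ∧
          (∀ j, condEntropy μ Q (X j) = 0) ∧ x = mutualInfo μ Q (X i)} =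
        {x : ℝ | ∃ Q : Ω → ℕ, Measurable Q ∧ (Set.range Q).Finite ∧
          (∀ j, condEntropy μ Q (X j) = 0) ∧ x = entropy μ Q} := fun i => by
    ext x
    refine exists_congr fun Q => and_congr_right fun hQ => and_congr_right fun hQf =>
      and_congr_right fun hQX => ?_
    rw [mutualInfo_eq_entropy_of_condEntropy_eq_zero hQ hQf (hX i) (hXfin i) (hQX i)]
  exact ⟨fun i k => by rw [hsets i, hsets k], fun i => by rw [hsets i]⟩

/-- Symmetry of Redundant Information, ordering `Q ⊏ X ↔ H[Q|X] = 0`,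
all system variables as sources: the quantity
`R_i := sSup {I[Q:X_i] | Q measurable with finite range, H[Q|X_j] = 0 for all j}`
does not depend on `i`, and equals `sSup {H[Q] | Q measurable with finite range,
H[Q|X_j] = 0 for all j}`. -/
theorem redundancy_symmetry {Ω : Type*} [MeasurableSpace Ω]
    (μ : Measure Ω) [IsProbabilityMeasure μ]
    (n : ℕ) (hn : 1 ≤ n) (X : Fin n → Ω → ℕ)
    (hX : ∀ i, Measurable (X i)) (hXfin : ∀ i, (Set.range (X i)).Finite) :
    (∀ i k : Fin n,
      sSup {x : ℝ | ∃ Q : Ω → ℕ, Measurable Q ∧ (Set.range Q).Finite ∧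
          (∀ j, condEntropy μ Q (X j) = 0) ∧ x = mutualInfo μ Q (X i)} =
        sSup {x : ℝ | ∃ Q : Ω → ℕ, Measurable Q ∧ (Set.range Q).Finite ∧
          (∀ j, condEntropy μ Q (X j) = 0) ∧ x = mutualInfo μ Q (X k)}) ∧
    ∀ i : Fin n,
      sSup {x : ℝ | ∃ Q : Ω → ℕ, Measurable Q ∧ (Set.range Q).Finite ∧
          (∀ j, condEntropy μ Q (X j) = 0) ∧ x = mutualInfo μ Q (X i)} =
        sSup {x : ℝ | ∃ Q : Ω → ℕ, Measurable Q ∧ (Set.range Q).Finite ∧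
          (∀ j, condEntropy μ Q (X j) = 0) ∧ x = entropy μ Q} :=
  redundancy_symmetry_general μ n X hX hXfin
end

section
/- (Exact version of Proposition 5, NIS mutual-information computation.) Let (Ω, μ) be a probability space, S, U, V, T finite nonempty measurable spaces with measurable singletons, ψ : S ≃ U × V a bijection (measurable with measurable inverse), X : Ω → S and Y : Ω → T measurable. Define A := ω ↦ (ψ (X ω)).1 and B := ω ↦ (ψ (X ω)).2. Assume that A is independent of the pair ⟨B, Y⟩, and that H[Y | B] = 0 and H[B | Y] = 0 (the intermediate representation B exactly captures Y). Then H[B] = I[X : Y] and H[A] = H[X | Y]. -/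
open MeasureTheory ProbabilityTheory Real

/-!
Since `ψ` is a bijection, `X` carries the same information as `⟨A, B⟩`, and `⟨X, Y⟩` the same
as `⟨A, ⟨B, Y⟩⟩`. Independence makes the entropies of these pairs additive, so
`H[X] = H[A] + H[B]` and `H[⟨X, Y⟩] = H[A] + H[⟨B, Y⟩]`. By the chain rule, the two vanishing
conditional entropies give `H[⟨B, Y⟩] = H[Y] = H[B]`, and both identities follow by linear
arithmetic from `H[⟨X, Y⟩] = H[Y] + H[X | Y]`.
-/

/-- `hq` says that `q` sums to `1` unless `c = 0`; this covers conditioning on a null event. -/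
lemma sum_negMulLog_const_mul {ι : Type*} (s : Finset ι) (c : ℝ) (q : ι → ℝ)
    (hq : ∑ i ∈ s, c * q i = c) :
    ∑ i ∈ s, negMulLog (c * q i) = negMulLog c + c * ∑ i ∈ s, negMulLog (q i) := by
  have hc : (∑ i ∈ s, q i) * negMulLog c = negMulLog c := by
    rw [← Finset.mul_sum] at hq
    simp only [negMulLog]
    linear_combination (-log c) * hq
  simp_rw [negMulLog_mul, Finset.sum_add_distrib, ← Finset.sum_mul, ← Finset.mul_sum, hc]

section Entropy

variable {Ω S T : Type*} [MeasurableSpace Ω] [MeasurableSpace S] [MeasurableSpace T]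

lemma entropy_eq_sum [Fintype S] (μ : Measure Ω) (X : Ω → S) :
    entropy μ X = ∑ x, negMulLog (μ (X ⁻¹' {x})).toReal :=
  tsum_fintype _

lemma sum_measure_preimage_singleton_toReal [Fintype S] [MeasurableSingletonClass S]
    (μ : Measure Ω) [IsFiniteMeasure μ] {X : Ω → S} (hX : Measurable X) :
    ∑ x, (μ (X ⁻¹' {x})).toReal = (μ Set.univ).toReal := by
  simpa [measureReal_def] using sum_measureReal_preimage_singleton (μ := μ) Finset.univ
    (fun x _ => hX (measurableSet_singleton x))

lemma entropy_comp_equiv (μ : Measure Ω) (X : Ω → S) (e : S ≃ T) :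
    entropy μ (fun ω => e (X ω)) = entropy μ X := by
  rw [entropy, entropy, ← e.tsum_eq]
  congr! with x
  ext ω
  simp

variable [Fintype S] [Fintype T] [MeasurableSingletonClass S] [MeasurableSingletonClass T]

lemma entropy_prod_of_indepFun (μ : Measure Ω) [IsProbabilityMeasure μ] {X : Ω → S} {Y : Ω → T}
    (hX : Measurable X) (hY : Measurable Y) (h : IndepFun X Y μ) :
    entropy μ (fun ω => (X ω, Y ω)) = entropy μ X + entropy μ Y := by
  have hjoint : ∀ x y, (μ ((fun ω => (X ω, Y ω)) ⁻¹' {(x, y)})).toReal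
      = (μ (X ⁻¹' {x})).toReal * (μ (Y ⁻¹' {y})).toReal := by
    intro x y
    rw [← ENNReal.toReal_mul, ← Set.singleton_prod_singleton, Set.mk_preimage_prod,
      h.measure_inter_preimage_eq_mul _ _ (measurableSet_singleton x) (measurableSet_singleton y)]
  have hmarg : ∀ x, ∑ y, (μ (X ⁻¹' {x})).toReal * (μ (Y ⁻¹' {y})).toReal
      = (μ (X ⁻¹' {x})).toReal := by
    intro x
    rw [← Finset.mul_sum, sum_measure_preimage_singleton_toReal μ hY, measure_univ,
      ENNReal.toReal_one, mul_one]
  rw [entropy_eq_sum, Fintype.sum_prod_type]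
  simp_rw [hjoint, sum_negMulLog_const_mul _ _ _ (hmarg _)]
  rw [Finset.sum_add_distrib, ← Finset.sum_mul, sum_measure_preimage_singleton_toReal μ hX,
    measure_univ, ENNReal.toReal_one, one_mul, entropy_eq_sum, entropy_eq_sum]

lemma entropy_prod_eq_add_condEntropy (μ : Measure Ω) [IsFiniteMeasure μ] {X : Ω → S}
    {Y : Ω → T} (hX : Measurable X) (hY : Measurable Y) :
    entropy μ (fun ω => (X ω, Y ω)) = entropy μ Y + condEntropy μ X Y := by
  have hjoint : ∀ x y, (μ ((fun ω => (X ω, Y ω)) ⁻¹' {(x, y)})).toReal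
      = (μ (Y ⁻¹' {y})).toReal * (μ[X ⁻¹' {x} | Y ⁻¹' {y}]).toReal := by
    intro x y
    rw [← ENNReal.toReal_mul, mul_comm, cond_mul_eq_inter (hY (measurableSet_singleton y)),
      ← Set.singleton_prod_singleton, Set.mk_preimage_prod, Set.inter_comm]
  have hmarg : ∀ y, ∑ x, (μ (Y ⁻¹' {y})).toReal * (μ[X ⁻¹' {x} | Y ⁻¹' {y}]).toReal
      = (μ (Y ⁻¹' {y})).toReal := by
    intro y
    rw [← Finset.mul_sum, sum_measure_preimage_singleton_toReal _ hX, ← ENNReal.toReal_mul,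
      mul_comm, cond_mul_eq_inter (hY (measurableSet_singleton y)), Set.inter_univ]
  rw [entropy_eq_sum, Fintype.sum_prod_type_right, entropy_eq_sum, condEntropy, tsum_fintype,
    ← Finset.sum_add_distrib]
  refine Fintype.sum_congr _ _ fun y => ?_
  simp_rw [hjoint]
  rw [sum_negMulLog_const_mul _ _ _ (hmarg y), entropy_eq_sum]

end Entropy

theorem nis_mutual_information_general {Ω S U V T : Type*} [MeasurableSpace Ω]
    [Fintype S] [MeasurableSpace S] [MeasurableSingletonClass S]
    [Fintype U] [MeasurableSpace U] [MeasurableSingletonClass U]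
    [Fintype V] [MeasurableSpace V] [MeasurableSingletonClass V]
    [Fintype T] [MeasurableSpace T] [MeasurableSingletonClass T]
    (μ : Measure Ω) [IsProbabilityMeasure μ]
    (ψ : S ≃ U × V)
    (X : Ω → S) (Y : Ω → T) (hX : Measurable X) (hY : Measurable Y)
    (A : Ω → U) (B : Ω → V)
    (hA : A = fun ω => (ψ (X ω)).1) (hB : B = fun ω => (ψ (X ω)).2)
    (hindep : IndepFun A (fun ω => (B ω, Y ω)) μ)
    (hYB : condEntropy μ Y B = 0) (hBY : condEntropy μ B Y = 0) :
    entropy μ B = mutualInfo μ X Y ∧ entropy μ A = condEntropy μ X Y := by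
  have hψX : Measurable fun ω => ψ (X ω) := (measurable_of_countable ψ).comp hX
  have hAm : Measurable A := hA ▸ hψX.fst
  have hBm : Measurable B := hB ▸ hψX.snd
  have hAB : (fun ω => (A ω, B ω)) = fun ω => ψ (X ω) := by subst hA hB; rfl
  have hABY : (fun ω => (A ω, (B ω, Y ω)))
      = fun ω => (ψ.prodCongr (Equiv.refl T) |>.trans (Equiv.prodAssoc U V T)) (X ω, Y ω) := by
    subst hA hB; rfl
  have hX_split : entropy μ X = entropy μ A + entropy μ B := by
    rw [← entropy_prod_of_indepFun μ hAm hBm (hindep.comp measurable_id measurable_fst), hAB,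
      entropy_comp_equiv]
  have hXY_split : entropy μ (fun ω => (X ω, Y ω))
      = entropy μ A + entropy μ (fun ω => (B ω, Y ω)) := by
    rw [← entropy_prod_of_indepFun μ hAm (hBm.prodMk hY) hindep, hABY, entropy_comp_equiv]
  have hBY_eq_Y : entropy μ (fun ω => (B ω, Y ω)) = entropy μ Y := by
    rw [entropy_prod_eq_add_condEntropy μ hBm hY, hBY, add_zero]
  have hBY_eq_B : entropy μ (fun ω => (B ω, Y ω)) = entropy μ B := by
    rw [← entropy_comp_equiv μ _ (Equiv.prodComm V T)]
    exact (entropy_prod_eq_add_condEntropy μ hY hBm).trans (by rw [hYB, add_zero])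
  have hXY := entropy_prod_eq_add_condEntropy μ hX hY
  constructor
  · rw [mutualInfo]
    linarith
  · linarith

/-- exact NIS mutual-information computation: if the invertible encoder `ψ`
splits `X` into noise `A` and representation `B` with `A` independent of `⟨B,Y⟩`,
`H[Y|B] = 0` and `H[B|Y] = 0`, then `H[B] = I[X:Y]` and `H[A] = H[X|Y]`. -/
theorem nis_mutual_information {Ω S U V T : Type*} [MeasurableSpace Ω]
    [Fintype S] [Nonempty S] [MeasurableSpace S] [MeasurableSingletonClass S]
    [Fintype U] [Nonempty U] [MeasurableSpace U] [MeasurableSingletonClass U]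
    [Fintype V] [Nonempty V] [MeasurableSpace V] [MeasurableSingletonClass V]
    [Fintype T] [Nonempty T] [MeasurableSpace T] [MeasurableSingletonClass T]
    (μ : Measure Ω) [IsProbabilityMeasure μ]
    (ψ : S ≃ U × V) (hψ : Measurable ψ) (hψ' : Measurable ψ.symm)
    (X : Ω → S) (Y : Ω → T) (hX : Measurable X) (hY : Measurable Y)
    (A : Ω → U) (B : Ω → V)
    (hA : A = fun ω => (ψ (X ω)).1) (hB : B = fun ω => (ψ (X ω)).2)
    (hindep : IndepFun A (fun ω => (B ω, Y ω)) μ)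
    (hYB : condEntropy μ Y B = 0) (hBY : condEntropy μ B Y = 0) :
    entropy μ B = mutualInfo μ X Y ∧ entropy μ A = condEntropy μ X Y :=
  nis_mutual_information_general μ ψ X Y hX hY A B hA hB hindep hYB hBY
end
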